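/- Fix a real a > 0, an integer k ≥ 1, a real λ, and an integer m with 0 ≤ m ≤ k−1. Then, with the limit taken over integers n > k tending to infinity, lim_{n→∞} n^{−m}·(d^m/dx^m)Θ_{n,k}(λ;x) evaluated at x = a equals (1 − exp(−λ))^m, where the m-th derivative is that of the smooth function x ↦ Θ_{n,k}(λ;x) on ℝ. -/

import Mathlib

open Filter

/-- `f_{n,ℓ}(y;x)`: the density at `y` of the `ℓ`-th order statistic of `n` i.i.d.
unit-rate exponential random variables conditioned to exceed `x`. -/
noncomputable def amsDensity (n ℓ : ℕ) (x y : ℝ) : ℝ :=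
  (ℓ : ℝ) * (n.choose ℓ) * (1 - Real.exp (-(y - x))) ^ (ℓ - 1) *
    Real.exp (-((n : ℝ) - ℓ + 1) * (y - x))

/-- `F_{n,ℓ}(a;x)`, with the convention `F_{n,0}(a;x) = 1`. -/
noncomputable def amsCDF (n ℓ : ℕ) (a x : ℝ) : ℝ :=
  if ℓ = 0 then 1 else ∫ u in (0 : ℝ)..(a - x), amsDensity n ℓ 0 u

/-- `Θ_{n,k}(λ;x) = Σ_{ℓ=0}^{k−1} (1−ℓ/n)^{nλ}·(F_{n,ℓ}(a;x) − F_{n,ℓ+1}(a;x))`. -/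
noncomputable def amsTheta (n k : ℕ) (a l x : ℝ) : ℝ :=
  ∑ ℓ ∈ Finset.range k, (1 - (ℓ : ℝ) / n) ^ ((n : ℝ) * l) *
    (amsCDF n ℓ a x - amsCDF n (ℓ + 1) a x)

/-!
`F_{n,ℓ} - F_{n,ℓ+1}` is the binomial probability `C(n,ℓ) (1 - e^{x-a})^ℓ e^{(n-ℓ)(x-a)}`, a finite
sum of exponentials `e^{(n-ℓ+j)(x-a)}`. Its `m`-th derivative at `a` is therefore
`C(n,ℓ) ∑_j (-1)^j C(ℓ,j) (n-ℓ+j)^m = (-1)^ℓ C(n,ℓ) (Δ^ℓ r^m)(n-ℓ)`;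
after division by `n^m` it tends to `(-1)^ℓ C(m,ℓ)`, because `C(n,ℓ) ~ n^ℓ/ℓ!` and `Δ^ℓ` kills
the monomials of degree `< ℓ` and sends `r^ℓ` to `ℓ!`. With `(1 - ℓ/n)^{nλ} → e^{-ℓλ}` the
binomial theorem sums the limits to `(1 - e^{-λ})^m`.
-/

open Finset Topology Real

lemma amsCDF_eq_zero_pow_add_integral (n ℓ : ℕ) (a x : ℝ) :
    amsCDF n ℓ a x = 0 ^ ℓ + ∫ u in (0 : ℝ)..(a - x), amsDensity n ℓ 0 u := by
  rcases ℓ with _ | ℓ <;> simp [amsCDF, amsDensity]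

lemma hasDerivAt_choose_mul_pow_mul_exp {n ℓ : ℕ} (hℓ : ℓ < n) (u : ℝ) :
    HasDerivAt (fun u => (n.choose ℓ : ℝ) * (1 - exp (-u)) ^ ℓ * exp (-((n : ℝ) - ℓ) * u))
      (amsDensity n ℓ 0 u - amsDensity n (ℓ + 1) 0 u) u := by
  have hbase : HasDerivAt (fun u => 1 - exp (-u)) (exp (-u)) u := by
    simpa using ((hasDerivAt_neg u).exp).const_sub 1
  have htail : HasDerivAt (fun u => exp (-((n : ℝ) - ℓ) * u))
      (-((n : ℝ) - ℓ) * exp (-((n : ℝ) - ℓ) * u)) u := by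
    simpa [mul_comm] using ((hasDerivAt_id u).const_mul (-((n : ℝ) - ℓ))).exp
  refine (((hbase.fun_pow ℓ).const_mul _).mul htail).congr_deriv ?_
  have hchoose : ((ℓ : ℝ) + 1) * (n.choose (ℓ + 1) : ℝ) = ((n : ℝ) - ℓ) * (n.choose ℓ : ℝ) := by
    have := congrArg (Nat.cast : ℕ → ℝ) (Nat.choose_succ_right_eq n ℓ)
    push_cast [Nat.cast_sub hℓ.le] at this
    linarith
  have hexp : exp (-((n : ℝ) - ℓ + 1) * u) = exp (-u) * exp (-((n : ℝ) - ℓ) * u) := by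
    rw [← exp_add]; ring_nf
  simp only [amsDensity, sub_zero, Nat.cast_add, Nat.cast_one, add_tsub_cancel_right]
  rw [hexp, show -((n : ℝ) - (ℓ + 1) + 1) * u = -((n : ℝ) - ℓ) * u by ring]
  linear_combination (1 - exp (-u)) ^ ℓ * exp (-((n : ℝ) - ℓ) * u) * hchoose

lemma amsCDF_sub_amsCDF_succ {n ℓ : ℕ} (hℓ : ℓ < n) (a x : ℝ) :
    amsCDF n ℓ a x - amsCDF n (ℓ + 1) a x =
      n.choose ℓ * (1 - exp (-(a - x))) ^ ℓ * exp (-((n : ℝ) - ℓ) * (a - x)) := by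
  have hint : ∀ j, IntervalIntegrable (amsDensity n j 0) MeasureTheory.volume 0 (a - x) :=
    fun j => (by unfold amsDensity; fun_prop : Continuous _).intervalIntegrable _ _
  rw [amsCDF_eq_zero_pow_add_integral, amsCDF_eq_zero_pow_add_integral, add_sub_add_comm,
    ← intervalIntegral.integral_sub (hint _) (hint _),
    intervalIntegral.integral_eq_sub_of_hasDerivAt
      (fun u _ => hasDerivAt_choose_mul_pow_mul_exp hℓ u) ((hint _).sub (hint _))]
  rcases ℓ with _ | ℓ <;> simp

lemma amsCDF_sub_amsCDF_succ_eq_sum_exp {n ℓ : ℕ} (hℓ : ℓ < n) (a : ℝ) :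
    (fun x => amsCDF n ℓ a x - amsCDF n (ℓ + 1) a x) = fun x =>
      ∑ j ∈ range (ℓ + 1), n.choose ℓ * ℓ.choose j * (-1) ^ j * exp ((n - ℓ + j) * (x - a)) := by
  funext x
  rw [amsCDF_sub_amsCDF_succ hℓ, sub_eq_neg_add, add_pow, mul_sum, sum_mul]
  refine sum_congr rfl fun j _ => ?_
  rw [neg_pow, ← exp_nat_mul, one_pow, mul_one,
    show (n - ℓ + j) * (x - a) = j * -(a - x) + -((n : ℝ) - ℓ) * (a - x) by ring, exp_add]
  ring

lemma iteratedDeriv_sum_mul_exp_mul_sub {ι : Type*} (s : Finset ι) (c r : ι → ℝ) (a : ℝ) (m : ℕ) :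
    iteratedDeriv m (fun x => ∑ i ∈ s, c i * exp (r i * (x - a))) a = ∑ i ∈ s, c i * r i ^ m := by
  rw [iteratedDeriv_fun_sum fun i _ => by fun_prop]
  refine sum_congr rfl fun i _ => ?_
  rw [iteratedDeriv_const_mul_field, iteratedDeriv_comp_sub_const (f := fun y => exp (r i * y)),
    iteratedDeriv_exp_const_mul]
  simp

lemma iteratedDeriv_amsTheta {n k : ℕ} (hkn : k ≤ n) (a l : ℝ) (m : ℕ) :
    iteratedDeriv m (fun x => amsTheta n k a l x) a =
      ∑ ℓ ∈ range k, (1 - (ℓ : ℝ) / n) ^ ((n : ℝ) * l) *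
        (n.choose ℓ * ∑ j ∈ range (ℓ + 1), (-1) ^ j * ℓ.choose j * ((n : ℝ) - ℓ + j) ^ m) := by
  have hsum : (fun x => amsTheta n k a l x) = fun x => ∑ ℓ ∈ range k,
      (1 - (ℓ : ℝ) / n) ^ ((n : ℝ) * l) * ∑ j ∈ range (ℓ + 1),
        n.choose ℓ * ℓ.choose j * (-1) ^ j * exp ((n - ℓ + j) * (x - a)) := by
    funext x
    exact sum_congr rfl fun ℓ hℓ => congrArg _ <|
      congrFun (amsCDF_sub_amsCDF_succ_eq_sum_exp ((mem_range.mp hℓ).trans_le hkn) a) x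
  rw [hsum, iteratedDeriv_fun_sum fun ℓ _ => by fun_prop]
  refine sum_congr rfl fun ℓ _ => ?_
  rw [iteratedDeriv_const_mul_field, iteratedDeriv_sum_mul_exp_mul_sub,
    mul_sum (range (ℓ + 1)) _ (n.choose ℓ : ℝ)]
  exact congrArg _ (sum_congr rfl fun j _ => by ring)

lemma sum_neg_one_pow_mul_choose_mul_pow {R : Type*} [CommRing R] (ℓ i : ℕ) :
    ∑ j ∈ range (ℓ + 1), (-1) ^ j * ℓ.choose j * (j : R) ^ i =
      (-1) ^ ℓ * (fwdDiff 1)^[ℓ] (fun r : R => r ^ i) 0 := by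
  rw [fwdDiff_iter_eq_sum_shift, mul_sum]
  refine sum_congr rfl fun j hj => ?_
  obtain ⟨t, rfl⟩ := Nat.exists_eq_add_of_le (Nat.lt_succ_iff.mp (mem_range.mp hj))
  simp only [zero_add, nsmul_eq_mul, mul_one, zsmul_eq_mul, Int.cast_mul, Int.cast_pow,
    Int.cast_neg, Int.cast_one, Int.cast_natCast, Nat.add_sub_cancel_left, pow_add]
  have hsq : ((-1 : R) ^ t) ^ 2 = 1 := by rw [← pow_mul, pow_mul', neg_one_sq, one_pow]
  linear_combination (-(-1 : R) ^ j * (j + t).choose j * (j : R) ^ i) * hsq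

lemma sum_neg_one_pow_mul_choose_mul_sub_add_pow_div_pow {x : ℝ} (hx : x ≠ 0) (ℓ m : ℕ) :
    (∑ j ∈ range (ℓ + 1), (-1) ^ j * ℓ.choose j * (x - ℓ + j) ^ m) / x ^ m =
      (x⁻¹) ^ ℓ * ∑ i ∈ range (m + 1), m.choose i * ((-1) ^ ℓ * (fwdDiff 1)^[ℓ] (· ^ i) 0) *
        (1 - ℓ * x⁻¹) ^ (m - i) * (x⁻¹) ^ (i - ℓ) := by
  have hexpand : ∀ j ∈ range (ℓ + 1), (-1) ^ j * ℓ.choose j * (x - ℓ + j) ^ m =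
      ∑ i ∈ range (m + 1), m.choose i * (x - ℓ) ^ (m - i) * ((-1) ^ j * ℓ.choose j * (j : ℝ) ^ i) :=
    fun j _ => by
      rw [add_comm, add_pow, mul_sum]
      exact sum_congr rfl fun i _ => by ring
  rw [sum_congr rfl hexpand, sum_comm, sum_div, mul_sum]
  refine sum_congr rfl fun i hi => ?_
  rw [← mul_sum, sum_neg_one_pow_mul_choose_mul_pow]
  rcases lt_or_ge i ℓ with hiℓ | hℓi
  · simp [fwdDiff_iter_pow_eq_zero_of_lt hiℓ]
  obtain ⟨t, rfl⟩ := Nat.exists_eq_add_of_le hℓi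
  obtain ⟨s, rfl⟩ := Nat.exists_eq_add_of_le (Nat.lt_succ_iff.mp (mem_range.mp hi))
  rw [show x - ℓ = x * (1 - ℓ * x⁻¹) by field_simp, Nat.add_sub_cancel_left,
    Nat.add_sub_cancel_left, mul_pow, inv_pow, inv_pow, pow_add, pow_add]
  field_simp

lemma tendsto_choose_mul_sum_neg_one_pow_mul_choose_mul_pow_div_pow (ℓ m : ℕ) :
    Tendsto (fun n : ℕ => n.choose ℓ *
        (∑ j ∈ range (ℓ + 1), (-1) ^ j * ℓ.choose j * ((n : ℝ) - ℓ + j) ^ m) / (n : ℝ) ^ m)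
      atTop (𝓝 ((-1) ^ ℓ * m.choose ℓ)) := by
  set P : ℝ → ℝ := fun ε => ∑ i ∈ range (m + 1),
    m.choose i * ((-1) ^ ℓ * (fwdDiff 1)^[ℓ] (· ^ i) 0) * (1 - ℓ * ε) ^ (m - i) * ε ^ (i - ℓ)
  have hinv : Tendsto (fun n : ℕ => (n : ℝ)⁻¹) atTop (𝓝 0) :=
    tendsto_inv_atTop_zero.comp tendsto_natCast_atTop_atTop
  have hchoose : Tendsto (fun n : ℕ => n.choose ℓ * ((n : ℝ)⁻¹) ^ ℓ) atTop
      (𝓝 (1 ^ ℓ / ℓ.factorial)) :=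
    ProbabilityTheory.tendsto_choose_mul_pow_atTop ℓ <| tendsto_const_nhds.congr' <|
      (eventually_ne_atTop 0).mono fun n hn => (mul_inv_cancel₀ (Nat.cast_ne_zero.mpr hn)).symm
  have hP : Tendsto (fun n : ℕ => P (n : ℝ)⁻¹) atTop (𝓝 (P 0)) :=
    ((by fun_prop : Continuous P).tendsto 0).comp hinv
  -- only `i = ℓ` survives at `ε = 0`: lower powers are killed by `Δ^ℓ`, higher ones by `ε^(i-ℓ)`
  have hP0 : P 0 = (-1) ^ ℓ * ℓ.factorial * m.choose ℓ := by
    simp only [P]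
    rw [sum_eq_single ℓ]
    · simp only [fwdDiff_iter_eq_factorial, Pi.natCast_apply, mul_zero, sub_zero, one_pow,
        mul_one, tsub_self, pow_zero]
      ring
    · intro i _ hiℓ
      rcases lt_or_gt_of_ne hiℓ with h | h
      · simp [fwdDiff_iter_pow_eq_zero_of_lt h]
      · simp [zero_pow (Nat.sub_ne_zero_of_lt h)]
    · intro hℓ
      simp [Nat.choose_eq_zero_of_lt (by simpa using hℓ : m < ℓ)]
  have hval : 1 ^ ℓ / ℓ.factorial * P 0 = (-1) ^ ℓ * m.choose ℓ := by
    rw [hP0, one_pow]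
    field_simp
  rw [← hval]
  refine (hchoose.mul hP).congr' ((eventually_ne_atTop 0).mono fun n hn => ?_)
  simp only [P]
  rw [mul_div_assoc, sum_neg_one_pow_mul_choose_mul_sub_add_pow_div_pow (Nat.cast_ne_zero.mpr hn)]
  ring

lemma tendsto_one_sub_div_rpow_natCast_mul (c l : ℝ) :
    Tendsto (fun n : ℕ => (1 - c / n) ^ ((n : ℝ) * l)) atTop (𝓝 (exp (-c * l))) := by
  have hlim : Tendsto (fun n : ℕ => ((1 + -c / n) ^ (n : ℝ)) ^ l) atTop (𝓝 (exp (-c) ^ l)) :=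
    ((continuousAt_rpow_const _ l (.inl (exp_pos _).ne')).tendsto).comp
      ((tendsto_one_add_div_rpow_exp (-c)).comp tendsto_natCast_atTop_atTop)
  rw [← exp_mul] at hlim
  refine hlim.congr' ?_
  filter_upwards [tendsto_natCast_atTop_atTop.eventually_ge_atTop c,
    eventually_ne_atTop 0] with n hcn hn
  have hbase : 0 ≤ 1 + -c / n := by
    rw [neg_div, ← sub_eq_add_neg, sub_nonneg]
    exact div_le_one_of_le₀ hcn n.cast_nonneg
  rw [← rpow_mul hbase, neg_div, ← sub_eq_add_neg]

lemma sum_range_choose_mul_pow_of_lt {R : Type*} [CommSemiring R] {m k : ℕ} (hmk : m < k) (y : R) :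
    ∑ ℓ ∈ range k, m.choose ℓ * y ^ ℓ = (1 + y) ^ m := by
  rw [add_comm, add_pow, ← sum_subset (range_subset_range.mpr hmk)]
  · exact sum_congr rfl fun ℓ _ => by ring
  · intro ℓ _ hℓ
    simp [Nat.choose_eq_zero_of_lt (by simpa using hℓ : m < ℓ)]

theorem tendsto_deriv_amsTheta_general (a : ℝ) (k : ℕ) (hk : 1 ≤ k)
    (l : ℝ) (m : ℕ) (hm : m ≤ k - 1) :
    Tendsto (fun n : ℕ =>
      (1 / (n : ℝ) ^ m) * iteratedDeriv m (fun x => amsTheta n k a l x) a)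
      atTop (nhds ((1 - Real.exp (-l)) ^ m)) := by
  have hlim : Tendsto (fun n : ℕ => ∑ ℓ ∈ range k, (1 - (ℓ : ℝ) / n) ^ ((n : ℝ) * l) *
      (n.choose ℓ * (∑ j ∈ range (ℓ + 1), (-1) ^ j * ℓ.choose j * ((n : ℝ) - ℓ + j) ^ m) /
        (n : ℝ) ^ m)) atTop (𝓝 (∑ ℓ ∈ range k, exp (-ℓ * l) * ((-1) ^ ℓ * m.choose ℓ))) :=
    tendsto_finsetSum _ fun ℓ _ => (tendsto_one_sub_div_rpow_natCast_mul ℓ l).mul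
      (tendsto_choose_mul_sum_neg_one_pow_mul_choose_mul_pow_div_pow ℓ m)
  have hsum : ∑ ℓ ∈ range k, exp (-ℓ * l) * ((-1) ^ ℓ * m.choose ℓ) = (1 - exp (-l)) ^ m := by
    rw [sub_eq_add_neg, ← sum_range_choose_mul_pow_of_lt (by omega : m < k)]
    refine sum_congr rfl fun ℓ _ => ?_
    rw [neg_pow (exp (-l)), ← exp_nat_mul, neg_mul_comm]
    ring
  rw [hsum] at hlim
  refine hlim.congr' ((eventually_ge_atTop k).mono fun n hkn => ?_)
  dsimp only
  rw [iteratedDeriv_amsTheta hkn, mul_sum]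
  exact sum_congr rfl fun ℓ _ => by ring

/-- For `0 ≤ m ≤ k−1`, `n^{−m}·(d^m/dx^m)Θ_{n,k}(λ;x)|_{x=a} → (1 − exp(−λ))^m`
as `n → ∞`. -/
theorem tendsto_deriv_amsTheta (a : ℝ) (ha : 0 < a) (k : ℕ) (hk : 1 ≤ k)
    (l : ℝ) (m : ℕ) (hm : m ≤ k - 1) :
    Tendsto (fun n : ℕ =>
      (1 / (n : ℝ) ^ m) * iteratedDeriv m (fun x => amsTheta n k a l x) a)
      atTop (nhds ((1 - Real.exp (-l)) ^ m)) :=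
  tendsto_deriv_amsTheta_general a k hk l m hm
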